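/- For every α ∈ (0,1), one has sin((1−α)π/2) < ((1−α)π/2)^α; equivalently, 2^α < ((1−α)π)^α / sin((1−α)π/2). -/

import Mathlib

open Real

/-- On `(0, 1]` use `sin x < x ≤ x ^ α`, beyond it `sin x ≤ 1 < x ^ α`. -/
theorem Real.sin_lt_rpow {x α : ℝ} (hx : 0 < x) (hα₀ : 0 < α) (hα₁ : α ≤ 1) :
    sin x < x ^ α := by
  rcases le_or_gt x 1 with hx₁ | hx₁
  · calc sin x < x := sin_lt hx
      _ = x ^ (1 : ℝ) := (rpow_one x).symm
      _ ≤ x ^ α := rpow_le_rpow_of_exponent_ge hx hx₁ hα₁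
  · calc sin x ≤ 1 := sin_le_one x
      _ < x ^ α := one_lt_rpow hx₁ hα₀

theorem Real.two_rpow_lt_two_mul_rpow_div_sin {x α : ℝ} (hx : 0 < x) (hxπ : x < π)
    (h : sin x < x ^ α) : (2 : ℝ) ^ α < (2 * x) ^ α / sin x := by
  rw [mul_rpow zero_le_two hx.le, lt_div_iff₀ (sin_pos_of_pos_of_lt_pi hx hxπ)]
  exact mul_lt_mul_of_pos_left h (rpow_pos_of_pos two_pos α)

theorem gl_line_k1_above (α : ℝ) (hα : α ∈ Set.Ioo (0:ℝ) 1) :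
    Real.sin ((1 - α) * π / 2) < ((1 - α) * π / 2) ^ α ∧
      (2:ℝ) ^ α < ((1 - α) * π) ^ α / Real.sin ((1 - α) * π / 2) := by
  obtain ⟨hα₀, hα₁⟩ := hα
  have hx : 0 < (1 - α) * π / 2 := by have := pi_pos; positivity
  have hxπ : (1 - α) * π / 2 < π := by nlinarith [pi_pos]
  have hsin := sin_lt_rpow hx hα₀ hα₁.le
  refine ⟨hsin, ?_⟩
  simpa only [mul_div_cancel₀ _ (two_ne_zero : (2 : ℝ) ≠ 0)] using
    two_rpow_lt_two_mul_rpow_div_sin hx hxπ hsin
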